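/- With W(t₁,t₂) as above, the diagonal function t ↦ W(−t, t) is strictly decreasing on (0, π), tends to −∞ as t → π⁻, is positive on (0, π/2], and therefore there exists a unique t* ∈ (π/2, π) with W(−t*, t*) = 0. -/

import Mathlib

/-!
By oddness of `ξ`, `W (-t) t = 4ξ + 2 sin² t / ξ + 2 cos t √(1 + sin² t) / sin t`, and a direct
computation gives its derivative as `-2 g² / (√(1 + sin² t) ξ² sin² t)` with
`g = sin³ t - cos t √(1 + sin² t) ξ`. On `(0, π)` we have `g > 0`: this is clear where `cos t ≤ 0`,
and on `(0, π/2)` it follows from `g 0 = 0` and `g' = 2 sin² t cos t + 2 sin³ t ξ / √(1 + sin² t) > 0`.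
Hence the diagonal is strictly decreasing; every term is nonnegative on `(0, π/2]`, the last term
tends to `-∞` as `t → π⁻`, and the intermediate value theorem gives the unique zero.
-/

open Real Set Filter

noncomputable def xi (t : ℝ) : ℝ :=
  ∫ τ in (0:ℝ)..t, Real.sin τ ^ 2 / Real.sqrt (1 + Real.sin τ ^ 2)

noncomputable def W (t₁ t₂ : ℝ) : ℝ :=
  2 * (xi t₂ - xi t₁) + (Real.sin t₂ - Real.sin t₁) ^ 2 / (xi t₂ - xi t₁)
    + Real.cos t₂ * Real.sqrt (1 + Real.sin t₂ ^ 2) / Real.sin t₂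
    - Real.cos t₁ * Real.sqrt (1 + Real.sin t₁ ^ 2) / Real.sin t₁

open Topology

lemma sqrt_one_add_sin_sq_pos (t : ℝ) : 0 < √(1 + sin t ^ 2) :=
  sqrt_pos.2 (by positivity)

lemma sq_sqrt_one_add_sin_sq (t : ℝ) : √(1 + sin t ^ 2) ^ 2 = 1 + sin t ^ 2 :=
  sq_sqrt (by positivity)

lemma hasDerivAt_sqrt_one_add_sin_sq (t : ℝ) :
    HasDerivAt (fun t => √(1 + sin t ^ 2)) (sin t * cos t / √(1 + sin t ^ 2)) t := by
  convert (((hasDerivAt_sin t).fun_pow 2).const_add 1).sqrt (by positivity) using 1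
  field_simp
  ring

lemma continuous_xi_integrand : Continuous fun τ => sin τ ^ 2 / √(1 + sin τ ^ 2) :=
  Continuous.div (by fun_prop) (by fun_prop) fun τ => (sqrt_one_add_sin_sq_pos τ).ne'

lemma hasDerivAt_xi (t : ℝ) : HasDerivAt xi (sin t ^ 2 / √(1 + sin t ^ 2)) t :=
  intervalIntegral.integral_hasDerivAt_right (continuous_xi_integrand.intervalIntegrable _ _)
    (continuous_xi_integrand.stronglyMeasurableAtFilter _ _) continuous_xi_integrand.continuousAt

lemma continuous_xi : Continuous xi :=
  continuous_iff_continuousAt.2 fun t => (hasDerivAt_xi t).continuousAt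

lemma xi_zero : xi 0 = 0 := intervalIntegral.integral_same

lemma xi_neg (t : ℝ) : xi (-t) = -xi t := by
  have h := intervalIntegral.integral_comp_neg (a := 0) (b := t)
    fun τ => sin τ ^ 2 / √(1 + sin τ ^ 2)
  simp only [sin_neg, neg_sq, neg_zero] at h
  rw [xi, xi, h, intervalIntegral.integral_symm]

lemma xi_pos {t : ℝ} (h₀ : 0 < t) (hπ : t ≤ π) : 0 < xi t := by
  refine intervalIntegral.intervalIntegral_pos_of_pos_on
    (continuous_xi_integrand.intervalIntegrable _ _) (fun τ hτ => ?_) h₀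
  have := sin_pos_of_pos_of_lt_pi hτ.1 (hτ.2.trans_le hπ)
  positivity

noncomputable def diagW (t : ℝ) : ℝ :=
  4 * xi t + 2 * sin t ^ 2 / xi t + 2 * cos t * √(1 + sin t ^ 2) / sin t

lemma W_neg_self (t : ℝ) : W (-t) t = diagW t := by
  rw [W, diagW, xi_neg, sin_neg, cos_neg, neg_sq]
  have h : (sin t - -sin t) ^ 2 / (xi t - -xi t) = 2 * sin t ^ 2 / xi t := by
    rw [show xi t - -xi t = 2 * xi t by ring, show (sin t - -sin t) ^ 2 = 2 * (2 * sin t ^ 2) by ring,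
      mul_div_mul_left _ _ two_ne_zero]
  rw [h, div_neg]
  ring

noncomputable def diagWNumerator (t : ℝ) : ℝ :=
  sin t ^ 3 - cos t * √(1 + sin t ^ 2) * xi t

lemma hasDerivAt_diagW {t : ℝ} (hs : sin t ≠ 0) (hξ : xi t ≠ 0) :
    HasDerivAt diagW
      (-2 * diagWNumerator t ^ 2 / (√(1 + sin t ^ 2) * xi t ^ 2 * sin t ^ 2)) t := by
  have hR := hasDerivAt_sqrt_one_add_sin_sq t
  have hξ' := hasDerivAt_xi t
  refine (((hξ'.const_mul 4).add ((((hasDerivAt_sin t).fun_pow 2).const_mul 2).div hξ' hξ)).add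
    ((((hasDerivAt_cos t).const_mul 2).fun_mul hR).div (hasDerivAt_sin t) hs)).congr_deriv ?_
  have hr := sq_sqrt_one_add_sin_sq t
  have hr₀ := (sqrt_one_add_sin_sq_pos t).ne'
  have hc := cos_sq' t
  rw [diagWNumerator]
  set r := √(1 + sin t ^ 2)
  field_simp
  linear_combination (2 * sin t ^ 2 * xi t ^ 2) * (hc - hr)

lemma hasDerivAt_diagWNumerator (t : ℝ) :
    HasDerivAt diagWNumerator
      (2 * sin t ^ 2 * cos t + 2 * sin t ^ 3 * xi t / √(1 + sin t ^ 2)) t := by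
  have hR := hasDerivAt_sqrt_one_add_sin_sq t
  refine (((hasDerivAt_sin t).fun_pow 3).sub
    (((hasDerivAt_cos t).fun_mul hR).mul (hasDerivAt_xi t))).congr_deriv ?_
  have hr := sq_sqrt_one_add_sin_sq t
  have hr₀ := (sqrt_one_add_sin_sq_pos t).ne'
  have hc := cos_sq' t
  set r := √(1 + sin t ^ 2)
  field_simp
  linear_combination (sin t * xi t) * (hr - hc)

lemma strictMonoOn_diagWNumerator : StrictMonoOn diagWNumerator (Icc 0 (π / 2)) := by
  refine strictMonoOn_of_hasDerivWithinAt_pos (convex_Icc _ _)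
    (HasDerivAt.continuousOn fun t _ => hasDerivAt_diagWNumerator t)
    (fun t _ => (hasDerivAt_diagWNumerator t).hasDerivWithinAt) fun t ht => ?_
  rw [interior_Icc] at ht
  have := sin_pos_of_pos_of_lt_pi ht.1 (by linarith [pi_pos, ht.2])
  have := cos_pos_of_mem_Ioo ⟨by linarith [pi_pos, ht.1], ht.2⟩
  have := xi_pos ht.1 (by linarith [pi_pos, ht.2])
  have := sqrt_one_add_sin_sq_pos t
  positivity

lemma diagWNumerator_pos {t : ℝ} (ht : t ∈ Ioo 0 π) : 0 < diagWNumerator t := by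
  rcases le_or_gt t (π / 2) with h | h
  · simpa [diagWNumerator, xi_zero] using
      strictMonoOn_diagWNumerator ⟨le_rfl, by positivity⟩ ⟨ht.1.le, h⟩ ht.1
  · have : 0 < sin t ^ 3 := pow_pos (sin_pos_of_pos_of_lt_pi ht.1 ht.2) 3
    have : cos t * √(1 + sin t ^ 2) * xi t ≤ 0 :=
      mul_nonpos_of_nonpos_of_nonneg
        (mul_nonpos_of_nonpos_of_nonneg (cos_nonpos_of_pi_div_two_le_of_le h.le (by linarith [ht.2]))
          (sqrt_one_add_sin_sq_pos t).le) (xi_pos ht.1 ht.2.le).le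
    rw [diagWNumerator]
    linarith

lemma continuousOn_diagW : ContinuousOn diagW (Ioo 0 π) := fun _ ht =>
  (hasDerivAt_diagW (sin_pos_of_pos_of_lt_pi ht.1 ht.2).ne'
    (xi_pos ht.1 ht.2.le).ne').continuousAt.continuousWithinAt

lemma strictAntiOn_diagW : StrictAntiOn diagW (Ioo 0 π) := by
  refine strictAntiOn_of_deriv_neg (convex_Ioo 0 π) continuousOn_diagW fun t ht => ?_
  rw [interior_Ioo] at ht
  have hs := sin_pos_of_pos_of_lt_pi ht.1 ht.2
  have hξ := xi_pos ht.1 ht.2.le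
  have := pow_pos (diagWNumerator_pos ht) 2
  have := sqrt_one_add_sin_sq_pos t
  rw [(hasDerivAt_diagW hs.ne' hξ.ne').deriv]
  exact div_neg_of_neg_of_pos (by linarith) (by positivity)

lemma diagW_pos {t : ℝ} (ht : t ∈ Ioc 0 (π / 2)) : 0 < diagW t := by
  have := sin_pos_of_pos_of_lt_pi ht.1 (by linarith [pi_pos, ht.2])
  have := xi_pos ht.1 (by linarith [pi_pos, ht.2])
  have := cos_nonneg_of_mem_Icc ⟨by linarith [pi_pos, ht.1], ht.2⟩
  rw [diagW]
  positivity

lemma tendsto_sin_nhdsLT_pi : Tendsto sin (𝓝[<] π) (𝓝[>] 0) := by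
  refine tendsto_nhdsWithin_iff.2 ⟨?_, ?_⟩
  · simpa using continuous_sin.continuousAt.tendsto.mono_left (nhdsWithin_le_nhds (a := π))
  · filter_upwards [Ioo_mem_nhdsLT pi_pos] with t ht using sin_pos_of_pos_of_lt_pi ht.1 ht.2

lemma tendsto_diagW_nhdsLT_pi : Tendsto diagW (𝓝[<] π) atBot := by
  have hξ := xi_pos pi_pos le_rfl
  have hξc := continuous_xi
  have h_reg : ContinuousAt (fun t => 4 * xi t + 2 * sin t ^ 2 / xi t) π := by
    fun_prop (disch := exact hξ.ne')
  have h_num : Tendsto (fun t => 2 * cos t * √(1 + sin t ^ 2)) (𝓝[<] π) (𝓝 (-2)) := by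
    have : Continuous fun t => 2 * cos t * √(1 + sin t ^ 2) := by fun_prop
    simpa using this.continuousAt.tendsto.mono_left (nhdsWithin_le_nhds (a := π))
  refine ((h_reg.tendsto.mono_left nhdsWithin_le_nhds).add_atBot
    (h_num.neg_mul_atTop (by norm_num) (tendsto_inv_nhdsGT_zero.comp tendsto_sin_nhdsLT_pi))).congr
    fun t => ?_
  simp only [diagW, div_eq_mul_inv, Function.comp_apply]

theorem existsUnique_eq_zero_of_strictAntiOn_of_tendsto_atBot {f : ℝ → ℝ} {a b : ℝ} (hab : a < b)
    (hf : StrictAntiOn f (Ico a b)) (hfc : ContinuousOn f (Ico a b)) (ha : 0 < f a)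
    (hb : Tendsto f (𝓝[<] b) atBot) : ∃! c, c ∈ Ioo a b ∧ f c = 0 := by
  obtain ⟨d, hd_neg, hd⟩ :=
    ((hb.eventually (eventually_lt_atBot 0)).and (Ioo_mem_nhdsLT hab)).exists
  obtain ⟨c, hc, hc_zero⟩ :=
    intermediate_value_Ioo' hd.1.le (hfc.mono (Icc_subset_Ico_right hd.2)) ⟨hd_neg, ha⟩
  have hc : c ∈ Ioo a b := ⟨hc.1, hc.2.trans hd.2⟩
  exact ⟨c, ⟨hc, hc_zero⟩, fun c' hc' =>
    hf.injOn (Ioo_subset_Ico_self hc'.1) (Ioo_subset_Ico_self hc) (hc'.2.trans hc_zero.symm)⟩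

theorem W_diagonal :
    StrictAntiOn (fun t => W (-t) t) (Ioo 0 π) ∧
    Tendsto (fun t => W (-t) t) (nhdsWithin π (Iio π)) atBot ∧
    (∀ t ∈ Ioc 0 (π/2), 0 < W (-t) t) ∧
    (∃! t : ℝ, t ∈ Ioo (π/2) π ∧ W (-t) t = 0) := by
  simp only [W_neg_self]
  have h_sub : Ico (π / 2) π ⊆ Ioo 0 π := fun t ht => ⟨by linarith [pi_pos, ht.1], ht.2⟩
  exact ⟨strictAntiOn_diagW, tendsto_diagW_nhdsLT_pi, fun t ht => diagW_pos ht,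
    existsUnique_eq_zero_of_strictAntiOn_of_tendsto_atBot (by linarith [pi_pos])
      (strictAntiOn_diagW.mono h_sub) (continuousOn_diagW.mono h_sub)
      (diagW_pos ⟨by positivity, le_rfl⟩) tendsto_diagW_nhdsLT_pi⟩
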